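/- Let G be an AG-group with left identity e and μ a normal fuzzy AG-subgroup of G. Then the set G/μ = {μ_x : x ∈ G} of fuzzy cosets, with operation μ_x ∘ μ_y = μ_{x·y}, is an AG-group: the operation is well defined on fuzzy cosets, satisfies the left invertive law (μ_x ∘ μ_y) ∘ μ_z = (μ_z ∘ μ_y) ∘ μ_x, has left identity μ_e (μ_e ∘ μ_x = μ_x for all x), and each μ_x has two-sided inverse μ_{x⁻¹} (μ_x ∘ μ_{x⁻¹} = μ_{x⁻¹} ∘ μ_x = μ_e). -/
import Mathlib


/-- An AG-group: a groupoid satisfying the left invertive law, with a left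
identity `e` and two-sided inverses. -/
class AGGroup (G : Type*) where
  mul : G → G → G
  e : G
  inv : G → G
  left_invertive : ∀ a b c : G, mul (mul a b) c = mul (mul c b) a
  left_id : ∀ a : G, mul e a = a
  inv_mul : ∀ a : G, mul (inv a) a = e
  mul_inv : ∀ a : G, mul a (inv a) = e

namespace AGGroup

variable {G : Type*} [AGGroup G]

/-- A fuzzy AG-subgroup: a fuzzy subset (a map into `[0,1]`) with
`μ(xy) ≥ min (μ x) (μ y)` and `μ x⁻¹ ≥ μ x`. -/
def IsFuzzyAGSubgroup (μ : G → ℝ) : Prop :=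
  (∀ x : G, μ x ∈ Set.Icc (0 : ℝ) 1) ∧
  (∀ x y : G, μ (mul x y) ≥ min (μ x) (μ y)) ∧
  (∀ x : G, μ (inv x) ≥ μ x)

/-- A normal fuzzy AG-subgroup: a fuzzy AG-subgroup with `μ((xy)x⁻¹) = μ y`. -/
def IsNormalFuzzyAGSubgroup (μ : G → ℝ) : Prop :=
  IsFuzzyAGSubgroup μ ∧ ∀ x y : G, μ (mul (mul x y) (inv x)) = μ y

/-- The fuzzy coset `μ_x`, given by `μ_x g = μ (g x⁻¹)`. -/
def fuzzyCoset (μ : G → ℝ) (x : G) : G → ℝ :=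
  fun g => μ (mul g (inv x))

/-- The level set `μ* = {a : μ a = μ e}` of a fuzzy AG-subgroup. -/
def levelSet (μ : G → ℝ) : Set G := {a : G | μ a = μ e}

/-- The right coset `S x = {s x : s ∈ S}` of a subset `S`. -/
def rightCoset (S : Set G) (x : G) : Set G := (fun s => mul s x) '' S

/-- An AG-subgroup: a nonempty subset closed under the operation and inverses. -/
def IsAGSubgroup (H : Set G) : Prop :=
  H.Nonempty ∧ (∀ a ∈ H, ∀ b ∈ H, mul a b ∈ H) ∧ (∀ a ∈ H, inv a ∈ H)

end AGGroup

open AGGroup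

section Aux

variable {G : Type*} [AGGroup G]

private lemma ag_cancel_right (b a : G) : mul (mul b a) (inv a) = b := by
  rw [left_invertive, inv_mul, left_id]

private lemma ag_inv_unique {a c : G} (h : mul a c = e) : c = inv a := by
  have hca : mul c a = e := by
    have h1 : mul (mul e c) a = mul (mul a c) e := left_invertive e c a
    rw [left_id, h, left_id] at h1
    exact h1
  calc c = mul (mul c a) (inv a) := (ag_cancel_right c a).symm
    _ = inv a := by rw [hca, left_id]

private lemma ag_medial (a b c d : G) :
    mul (mul a b) (mul c d) = mul (mul a c) (mul b d) := by
  rw [left_invertive a b (mul c d), left_invertive c d b,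
    left_invertive (mul b d) c a]

private lemma ag_inv_mul_rev (x y : G) :
    inv (mul x y) = mul (inv x) (inv y) := by
  refine (ag_inv_unique ?_).symm
  rw [ag_medial, AGGroup.mul_inv, AGGroup.mul_inv, left_id]

private lemma ag_inv_e : (inv e : G) = e :=
  (ag_inv_unique (left_id e)).symm

private lemma ag_restore (g b : G) : mul (mul g (inv b)) b = g := by
  rw [left_invertive, AGGroup.mul_inv, left_id]

variable {μ : G → ℝ} (hμ : IsNormalFuzzyAGSubgroup μ)
include hμ

private lemma ag_mu_comm (u v : G) : μ (mul u v) = μ (mul v u) := by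
  have h1 : mul v u = mul (mul u v) e := by
    have := left_invertive e v u
    rw [left_id] at this
    exact this
  rw [h1, ← ag_inv_e]
  have := hμ.2 e (mul u v)
  rw [left_id] at this
  exact this.symm

private lemma ag_mu_e_ge (t : G) : μ e ≥ μ t := by
  have h1 : μ (mul t (inv t)) ≥ min (μ t) (μ (inv t)) := hμ.1.2.1 t (inv t)
  rw [AGGroup.mul_inv] at h1
  exact le_trans (le_min le_rfl (hμ.1.2.2 t)) h1

private lemma ag_coset_ge {a b : G} (hba : μ (mul b (inv a)) = μ e)
    (g : G) : μ (mul g (inv a)) ≥ μ (mul g (inv b)) := by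
  have hg : mul g (inv a) = mul (mul (inv a) b) (mul g (inv b)) := by
    conv_lhs => rw [← ag_restore g b]
    rw [left_invertive]
  have hab : μ (mul (inv a) b) = μ e := by
    rw [ag_mu_comm hμ]; exact hba
  have hmin := hμ.1.2.1 (mul (inv a) b) (mul g (inv b))
  rw [← hg, hab] at hmin
  exact le_trans (le_min (ag_mu_e_ge hμ _) le_rfl) hmin

/-- If `μ(a b⁻¹) = μ(b a⁻¹) = μ e` then the fuzzy cosets of `a`, `b` agree. -/
private lemma ag_coset_eq {a b : G} (hab : μ (mul a (inv b)) = μ e)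
    (hba : μ (mul b (inv a)) = μ e) : fuzzyCoset μ a = fuzzyCoset μ b := by
  funext g
  exact le_antisymm (ag_coset_ge hμ hab g) (ag_coset_ge hμ hba g)

end Aux

/-- the fuzzy cosets of a normal fuzzy AG-subgroup form an
AG-group under `μ_x ∘ μ_y = μ_{x·y}`: the operation is well defined, satisfies
the left invertive law, has left identity `μ_e`, and `μ_{x⁻¹}` is a two-sided
inverse of `μ_x`. -/
theorem quotient_fuzzyCosets_AGGroup {G : Type*} [AGGroup G] (μ : G → ℝ)
    (hμ : IsNormalFuzzyAGSubgroup μ) :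
    (∀ x y x' y' : G, fuzzyCoset μ x = fuzzyCoset μ x' →
      fuzzyCoset μ y = fuzzyCoset μ y' →
      fuzzyCoset μ (mul x y) = fuzzyCoset μ (mul x' y')) ∧
    (∀ x y z : G,
      fuzzyCoset μ (mul (mul x y) z) = fuzzyCoset μ (mul (mul z y) x)) ∧
    (∀ x : G, fuzzyCoset μ (mul e x) = fuzzyCoset μ x) ∧
    (∀ x : G, fuzzyCoset μ (mul x (inv x)) = fuzzyCoset μ (e : G) ∧
      fuzzyCoset μ (mul (inv x) x) = fuzzyCoset μ (e : G)) := by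
  refine ⟨?_, fun x y z => congrArg (fuzzyCoset μ) (left_invertive x y z),
    fun x => congrArg (fuzzyCoset μ) (left_id x),
    fun x => ⟨congrArg (fuzzyCoset μ) (mul_inv x),
      congrArg (fuzzyCoset μ) (inv_mul x)⟩⟩
  intro x y x' y' hx hy
  -- extract the four `μ e` facts
  have key : ∀ a b : G, fuzzyCoset μ a = fuzzyCoset μ b →
      μ (mul a (inv b)) = μ e ∧ μ (mul b (inv a)) = μ e := by
    intro a b h
    constructor
    · have := congrFun h a
      simp only [fuzzyCoset, AGGroup.mul_inv] at this
      rw [← this]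
    · have := congrFun h b
      simp only [fuzzyCoset] at this
      rw [this, AGGroup.mul_inv]
  obtain ⟨hx1, hx2⟩ := key x x' hx
  obtain ⟨hy1, hy2⟩ := key y y' hy
  -- μ((xy)(x'y')⁻¹) = μ e and symmetrically
  have main : ∀ a b a' b' : G, μ (mul a (inv a')) = μ e →
      μ (mul b (inv b')) = μ e →
      μ (mul (mul a b) (inv (mul a' b'))) = μ e := by
    intro a b a' b' h1 h2
    have hrw : mul (mul a b) (inv (mul a' b')) =
        mul (mul a (inv a')) (mul b (inv b')) := by
      rw [ag_inv_mul_rev, ag_medial]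
    have hmin := hμ.1.2.1 (mul a (inv a')) (mul b (inv b'))
    rw [← hrw, h1, h2, min_self] at hmin
    exact le_antisymm (ag_mu_e_ge hμ _) hmin
  exact ag_coset_eq hμ (main x y x' y' hx1 hy1) (main x' y' x y hx2 hy2)
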